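/- arXiv:1701.02130 — 2 statements merged into one kernel-verified Lean document; each statement's English description precedes it below -/
import Mathlib

section
/- Let π : M₁ → M₀ be a covering map between metric spaces that is a local isometry. Fix x ∈ M₀, z ∈ M₁ and ρ > 0, and assume that every y ∈ π⁻¹(x) with dist(z, y) < ρ can be joined to z by a continuous path in M₁ of length < ρ. Then there is an injection from the set {y ∈ π⁻¹(x) : dist(z, y) < ρ} into the set of path-homotopy classes (relative to endpoints) of loops in M₀ based at x that admit a representative of length < 2ρ. In particular, if there are at most N such path-homotopy classes, then z lies in at most N of the open balls B(y, ρ) with y ∈ π⁻¹(x). -/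
open scoped ENNReal NNReal

/-- A map between metric spaces is a local isometry if around every point there is a
metric ball on which it preserves distances. -/
def IsLocalIsometry {M₁ M₀ : Type*} [MetricSpace M₁] [MetricSpace M₀] (π : M₁ → M₀) : Prop :=
  ∀ z : M₁, ∃ ε > 0, ∀ a ∈ Metric.ball z ε, ∀ b ∈ Metric.ball z ε, dist (π a) (π b) = dist a b

/-- The length (total variation) of a path in a metric space. -/
noncomputable def pathLength {X : Type*} [MetricSpace X] {a b : X} (γ : Path a b) : ℝ≥0∞ :=
  eVariationOn (fun t => γ t) Set.univ

/-!
Fix a fiber point `y₀` with `dist z y₀ < ρ`, and for every such fiber point `y` a path `γ_y`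
from `z` to `y` of length `< ρ`. Projecting `γ_{y₀}⁻¹ ⬝ γ_y` gives a loop at `x` of length
`< 2ρ`, because a local isometry is locally `1`-Lipschitz and hence does not increase length.
The lift of this loop starting at `y₀` ends at `y`, and by the monodromy theorem the endpoint
of a lift depends only on the homotopy class of the loop, so the class determines `y`.
-/

open Set unitInterval Topology

theorem eVariationOn_comp_le_of_forall_lipschitzOnWith {X Y : Type*} [PseudoEMetricSpace X]
    [PseudoEMetricSpace Y] {f : X → Y} {K : ℝ≥0} (hf : ∀ x, ∃ U ∈ 𝓝 x, LipschitzOnWith K f U)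
    {γ : I → X} (hγ : Continuous γ) :
    eVariationOn (f ∘ γ) univ ≤ K * eVariationOn γ univ := by
  choose U hU hfU using hf
  obtain ⟨t, ht0, ht, ⟨n, htn⟩, hsub⟩ := exists_monotone_Icc_subset_open_cover_unitInterval
    (fun s => isOpen_interior.preimage hγ)
    (fun s _ => mem_iUnion.2 ⟨s, mem_interior_iff_mem_nhds.2 (hU (γ s))⟩)
  have hpiece : ∀ i, eVariationOn (f ∘ γ) (Icc (t i) (t (i + 1))) ≤
      K * eVariationOn γ (Icc (t i) (t (i + 1))) := fun i => by
    obtain ⟨s, hs⟩ := hsub i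
    exact (hfU (γ s)).comp_eVariationOn_le fun r hr => interior_subset (hs hr)
  calc eVariationOn (f ∘ γ) univ
      = ∑ i ∈ Finset.range n, eVariationOn (f ∘ γ) (Icc (t i) (t (i + 1))) := by
        rw [eVariationOn.sum' _ ht, ht0, htn n le_rfl, univ_eq_Icc]
    _ ≤ ∑ i ∈ Finset.range n, K * eVariationOn γ (Icc (t i) (t (i + 1))) :=
        Finset.sum_le_sum fun i _ => hpiece i
    _ = K * eVariationOn γ univ := by
        rw [← Finset.mul_sum, eVariationOn.sum' _ ht, ht0, htn n le_rfl, univ_eq_Icc]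

theorem IsLocalIsometry.exists_lipschitzOnWith_one {M₁ M₀ : Type*} [MetricSpace M₁]
    [MetricSpace M₀] {π : M₁ → M₀} (hπ : IsLocalIsometry π) (z : M₁) :
    ∃ U ∈ 𝓝 z, LipschitzOnWith 1 π U := by
  obtain ⟨ε, hε, hiso⟩ := hπ z
  refine ⟨Metric.ball z ε, Metric.ball_mem_nhds z hε, fun a ha b hb => ?_⟩
  rw [edist_dist, edist_dist, hiso a ha b hb, ENNReal.coe_one, one_mul]

section pathLength

variable {X : Type*} [MetricSpace X] {a b c : X}

theorem pathLength_eq_eVariationOn_extend (γ : Path a b) :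
    pathLength γ = eVariationOn γ.extend (Icc 0 1) := by
  have := eVariationOn.comp_eq_of_monotoneOn γ.extend _
    ((Subtype.mono_coe (· ∈ Icc (0 : ℝ) 1)).monotoneOn univ)
  rw [image_univ, Subtype.range_coe] at this
  rw [← this]
  exact eVariationOn.eq_of_eqOn fun t _ => (γ.extend_extends' t).symm

theorem pathLength_symm_le (γ : Path a b) : pathLength γ.symm ≤ pathLength γ :=
  eVariationOn.comp_le_of_antitoneOn (fun t => γ t) σ (strictAnti_symm.antitone.antitoneOn _)
    (mapsTo_univ _ _)

theorem pathLength_trans_le (γ : Path a b) (γ' : Path b c) :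
    pathLength (γ.trans γ') ≤ pathLength γ + pathLength γ' := by
  simp only [pathLength_eq_eVariationOn_extend]
  have h₀ : (0 : ℝ) ≤ 1 / 2 := by norm_num
  have h₁ : (1 / 2 : ℝ) ≤ 1 := by norm_num
  have hsplit := eVariationOn.Icc_add_Icc (γ.trans γ').extend h₀ h₁ (mem_univ _)
  simp only [univ_inter] at hsplit
  rw [← hsplit]
  gcongr
  · rw [eVariationOn.eq_of_eqOn fun t (ht : t ∈ Icc 0 (1 / 2)) =>
      γ.extend_trans_of_le_half γ' ht.2]
    refine eVariationOn.comp_le_of_monotoneOn (φ := fun t : ℝ => 2 * t) _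
      (fun s _ t _ hst => by linarith) fun t ht => ⟨by linarith [ht.1], by linarith [ht.2]⟩
  · rw [eVariationOn.eq_of_eqOn fun t (ht : t ∈ Icc (1 / 2) 1) =>
      γ.extend_trans_of_half_le γ' ht.1]
    refine eVariationOn.comp_le_of_monotoneOn (φ := fun t : ℝ => 2 * t - 1) _
      (fun s _ t _ hst => by linarith) fun t ht => ⟨by linarith [ht.1], by linarith [ht.2]⟩

theorem pathLength_cast (γ : Path a b) {a' b' : X} (ha : a' = a) (hb : b' = b) :
    pathLength (γ.cast ha hb) = pathLength γ := rfl

theorem IsLocalIsometry.pathLength_map_le {Y : Type*} [MetricSpace Y] {π : X → Y}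
    (hπ : IsLocalIsometry π) (hc : Continuous π) (γ : Path a b) :
    pathLength (γ.map hc) ≤ pathLength γ := by
  have := eVariationOn_comp_le_of_forall_lipschitzOnWith hπ.exists_lipschitzOnWith_one
    γ.continuous
  rwa [ENNReal.coe_one, one_mul] at this

end pathLength

namespace IsCoveringMap

variable {E X : Type*} [TopologicalSpace E] [TopologicalSpace X] {p : E → X}

theorem monodromy_mk_cast_map (cov : IsCoveringMap p) {e₀ e₁ : E} (Γ : Path e₀ e₁) {x y : X}
    (hx : p e₀ = x) (hy : p e₁ = y) :
    cov.monodromy ⟦(Γ.map cov.continuous).cast hx.symm hy.symm⟧ ⟨e₀, hx⟩ = ⟨e₁, hy⟩ := by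
  subst hx hy
  have := cov.monodromy_map (.mk Γ)
  rwa [← Path.Homotopic.Quotient.mk_map] at this

theorem eq_of_mk_cast_map_eq (cov : IsCoveringMap p) {e₀ e₁ e₂ : E} {x y : X}
    (Γ₁ : Path e₀ e₁) (Γ₂ : Path e₀ e₂) (h₀ : p e₀ = x) (h₁ : p e₁ = y) (h₂ : p e₂ = y)
    (h : (⟦(Γ₁.map cov.continuous).cast h₀.symm h₁.symm⟧ : Path.Homotopic.Quotient x y) =
      ⟦(Γ₂.map cov.continuous).cast h₀.symm h₂.symm⟧) :
    e₁ = e₂ := by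
  have := congrArg (cov.monodromy · ⟨e₀, h₀⟩) h
  rw [monodromy_mk_cast_map _ _ _ h₁, monodromy_mk_cast_map _ _ _ h₂] at this
  exact congrArg Subtype.val this

end IsCoveringMap

def shortLoopClasses {X : Type*} [MetricSpace X] (x : X) (L : ℝ≥0∞) :
    Set (Path.Homotopic.Quotient x x) :=
  {c | ∃ γ : Path x x, ⟦γ⟧ = c ∧ pathLength γ < L}

theorem exists_injective_shortLoopClasses {M₁ M₀ : Type*} [MetricSpace M₁] [MetricSpace M₀]
    {π : M₁ → M₀} (hcov : IsCoveringMap π) (hloc : IsLocalIsometry π) {x : M₀} {z : M₁}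
    {ρ : ℝ} (hpath : ∀ y : M₁, π y = x → dist z y < ρ →
      ∃ γ : Path z y, pathLength γ < ENNReal.ofReal ρ) :
    ∃ Φ : {y : M₁ // π y = x ∧ dist z y < ρ} → shortLoopClasses x (ENNReal.ofReal (2 * ρ)),
      Function.Injective Φ := by
  rcases isEmpty_or_nonempty {y : M₁ // π y = x ∧ dist z y < ρ} with hempty | ⟨⟨y₀⟩⟩
  · exact ⟨isEmptyElim, fun y => isEmptyElim y⟩
  choose γ hγ using fun y : {y : M₁ // π y = x ∧ dist z y < ρ} => hpath y y.2.1 y.2.2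
  let loop (y : {y : M₁ // π y = x ∧ dist z y < ρ}) : Path x x :=
    (((γ y₀).symm.trans (γ y)).map hcov.continuous).cast y₀.2.1.symm y.2.1.symm
  have hρ : 0 ≤ ρ := dist_nonneg.trans y₀.2.2.le
  have hloop : ∀ y, pathLength (loop y) < ENNReal.ofReal (2 * ρ) := fun y => calc
    pathLength (loop y) ≤ pathLength ((γ y₀).symm.trans (γ y)) :=
      (pathLength_cast _ _ _).trans_le (hloc.pathLength_map_le hcov.continuous _)
    _ ≤ pathLength (γ y₀).symm + pathLength (γ y) := pathLength_trans_le _ _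
    _ ≤ pathLength (γ y₀) + pathLength (γ y) := by gcongr; exact pathLength_symm_le _
    _ < ENNReal.ofReal ρ + ENNReal.ofReal ρ := ENNReal.add_lt_add (hγ y₀) (hγ y)
    _ = ENNReal.ofReal (2 * ρ) := by rw [two_mul, ENNReal.ofReal_add hρ hρ]
  refine ⟨fun y => ⟨⟦loop y⟧, loop y, rfl, hloop y⟩, fun y y' h => Subtype.ext ?_⟩
  exact hcov.eq_of_mk_cast_map_eq ((γ y₀).symm.trans (γ y)) ((γ y₀).symm.trans (γ y'))
    y₀.2.1 y.2.1 y'.2.1 (congrArg Subtype.val h)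

theorem fiber_points_inject_into_short_loop_classes_general
    {M₁ M₀ : Type*} [MetricSpace M₁] [MetricSpace M₀]
    (π : M₁ → M₀) (hcov : IsCoveringMap π) (hloc : IsLocalIsometry π)
    (x : M₀) (z : M₁) (ρ : ℝ)
    (hpath : ∀ y : M₁, π y = x → dist z y < ρ →
      ∃ γ : Path z y, pathLength γ < ENNReal.ofReal ρ) :
    (∃ Φ : {y : M₁ // π y = x ∧ dist z y < ρ} →
        {c : Path.Homotopic.Quotient x x //
          ∃ γ : Path x x, ⟦γ⟧ = c ∧ pathLength γ < ENNReal.ofReal (2 * ρ)},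
      Function.Injective Φ) ∧
    (∀ N : ℕ,
      {c : Path.Homotopic.Quotient x x |
        ∃ γ : Path x x, ⟦γ⟧ = c ∧ pathLength γ < ENNReal.ofReal (2 * ρ)}.Finite →
      {c : Path.Homotopic.Quotient x x |
        ∃ γ : Path x x, ⟦γ⟧ = c ∧ pathLength γ < ENNReal.ofReal (2 * ρ)}.ncard ≤ N →
      {y : M₁ | π y = x ∧ z ∈ Metric.ball y ρ}.Finite ∧
        {y : M₁ | π y = x ∧ z ∈ Metric.ball y ρ}.ncard ≤ N) := by
  obtain ⟨Φ, hΦ⟩ := exists_injective_shortLoopClasses hcov hloc hpath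
  refine ⟨⟨Φ, hΦ⟩, fun N hfin hcard => ?_⟩
  have : Finite (shortLoopClasses x (ENNReal.ofReal (2 * ρ))) := hfin.to_subtype
  exact ⟨Set.finite_coe_iff.mp (Finite.of_injective Φ hΦ),
    (Nat.card_le_card_of_injective Φ hΦ).trans hcard⟩

/-- **Lemma 2.1.** Let `π : M₁ → M₀` be a covering map between metric spaces which is a
local isometry, `x ∈ M₀`, `z ∈ M₁`, `ρ > 0`, and assume every `y ∈ π⁻¹(x)` with
`dist z y < ρ` can be joined to `z` by a path of length `< ρ`. Then the fiber points
`y ∈ π⁻¹(x)` with `dist z y < ρ` inject into the path-homotopy classes of loops at `x`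
having a representative of length `< 2ρ`; in particular, if there are at most `N` such
classes, then `z` lies in at most `N` of the balls `B(y, ρ)`, `y ∈ π⁻¹(x)`. -/
theorem fiber_points_inject_into_short_loop_classes
    {M₁ M₀ : Type*} [MetricSpace M₁] [MetricSpace M₀]
    (π : M₁ → M₀) (hcov : IsCoveringMap π) (hloc : IsLocalIsometry π)
    (x : M₀) (z : M₁) (ρ : ℝ) (hρ : 0 < ρ)
    (hpath : ∀ y : M₁, π y = x → dist z y < ρ →
      ∃ γ : Path z y, pathLength γ < ENNReal.ofReal ρ) :
    (∃ Φ : {y : M₁ // π y = x ∧ dist z y < ρ} →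
        {c : Path.Homotopic.Quotient x x //
          ∃ γ : Path x x, ⟦γ⟧ = c ∧ pathLength γ < ENNReal.ofReal (2 * ρ)},
      Function.Injective Φ) ∧
    (∀ N : ℕ,
      {c : Path.Homotopic.Quotient x x |
        ∃ γ : Path x x, ⟦γ⟧ = c ∧ pathLength γ < ENNReal.ofReal (2 * ρ)}.Finite →
      {c : Path.Homotopic.Quotient x x |
        ∃ γ : Path x x, ⟦γ⟧ = c ∧ pathLength γ < ENNReal.ofReal (2 * ρ)}.ncard ≤ N →
      {y : M₁ | π y = x ∧ z ∈ Metric.ball y ρ}.Finite ∧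
        {y : M₁ | π y = x ∧ z ∈ Metric.ball y ρ}.ncard ≤ N) :=
  fiber_points_inject_into_short_loop_classes_general π hcov hloc x z ρ hpath
end

section
/- Let π : M₁ → M₀ be a covering map between metric spaces that is a local isometry. Fix x ∈ M₀ and y ∈ π⁻¹(x), and let D_y = {z ∈ M₁ : dist(z, y) ≤ dist(z, y′) for all y′ ∈ π⁻¹(x)} be the Dirichlet fundamental domain centered at y. If z ∈ D_y and there exists a continuous path in M₀ from π(z) to x of length < r, then dist(z, y) < r. Consequently, if K ⊆ M₀ is a set such that every point of K can be joined to x by a continuous path in M₀ of length < r, then π⁻¹(K) ∩ D_y is contained in the open ball B(y, r). -/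
open scoped ENNReal NNReal

/-- The Dirichlet fundamental domain of `π` centered at a fiber point `y ∈ π⁻¹(x)`. -/
def dirichletDomain {M₁ M₀ : Type*} [MetricSpace M₁] [MetricSpace M₀]
    (π : M₁ → M₀) (x : M₀) (y : M₁) : Set M₁ :=
  {z : M₁ | ∀ y' : M₁, π y' = x → dist z y ≤ dist z y'}

/-!
Lift a path `γ` from `π z` to `x` to a path starting at `z`; it ends at some `w` over `x`.
Cutting `[0, 1]` into finitely many pieces, each mapped by the lift into a ball on which `π` is
an isometry, the triangle inequality gives `dist z w ≤ length γ < r`, and `dist z y ≤ dist z w`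
because `z ∈ D_y`.
-/

open unitInterval in
theorem IsLocalIsometry.edist_le_eVariationOn_comp {M₁ M₀ : Type*} [MetricSpace M₁]
    [MetricSpace M₀] {π : M₁ → M₀} (hπ : IsLocalIsometry π) (Γ : C(I, M₁)) :
    edist (Γ 0) (Γ 1) ≤ eVariationOn (π ∘ Γ) Set.univ := by
  choose ε hε hiso using hπ
  obtain ⟨t, ht₀, ht_mono, ⟨N, htN⟩, ht_sub⟩ :=
    exists_monotone_Icc_subset_open_cover_unitInterval
      (c := fun z ↦ Γ ⁻¹' Metric.ball z (ε z))
      (fun z ↦ Metric.isOpen_ball.preimage Γ.continuous)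
      (fun s _ ↦ Set.mem_iUnion.2 ⟨Γ s, Metric.mem_ball_self (hε _)⟩)
  have edist_piece :
      ∀ i, edist (Γ (t i)) (Γ (t (i + 1))) = edist (π (Γ (t (i + 1)))) (π (Γ (t i))) := by
    intro i
    obtain ⟨z, hz⟩ := ht_sub i
    have hle : t i ≤ t (i + 1) := ht_mono i.le_succ
    rw [edist_dist, edist_dist, hiso z _ (hz ⟨hle, le_rfl⟩) _ (hz ⟨le_rfl, hle⟩), dist_comm]
  calc edist (Γ 0) (Γ 1) = edist (Γ (t 0)) (Γ (t N)) := by rw [ht₀, htN N le_rfl]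
    _ ≤ ∑ i ∈ Finset.range N, edist (Γ (t i)) (Γ (t (i + 1))) :=
      edist_le_range_sum_edist (fun i ↦ Γ (t i)) N
    _ = ∑ i ∈ Finset.range N, edist ((π ∘ Γ) (t (i + 1))) ((π ∘ Γ) (t i)) :=
      Finset.sum_congr rfl fun i _ ↦ edist_piece i
    _ ≤ eVariationOn (π ∘ Γ) Set.univ := eVariationOn.sum_le ht_mono fun _ ↦ Set.mem_univ _

theorem IsCoveringMap.exists_mem_fiber_edist_le_pathLength {M₁ M₀ : Type*} [MetricSpace M₁]
    [MetricSpace M₀] {π : M₁ → M₀} (hcov : IsCoveringMap π) (hloc : IsLocalIsometry π)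
    {x : M₀} (z : M₁) (γ : Path (π z) x) : ∃ w, π w = x ∧ edist z w ≤ pathLength γ := by
  set Γ := hcov.liftPath γ.toContinuousMap z γ.source
  have hΓ : π ∘ Γ = γ := hcov.liftPath_lifts γ.toContinuousMap z γ.source
  refine ⟨Γ 1, by simpa using congrFun hΓ 1, ?_⟩
  calc edist z (Γ 1) = edist (Γ 0) (Γ 1) := by rw [hcov.liftPath_zero]
    _ ≤ eVariationOn (π ∘ Γ) Set.univ := hloc.edist_le_eVariationOn_comp Γ
    _ = pathLength γ := by rw [hΓ]; rfl

theorem dist_lt_of_mem_dirichletDomain {M₁ M₀ : Type*} [MetricSpace M₁] [MetricSpace M₀]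
    {π : M₁ → M₀} (hcov : IsCoveringMap π) (hloc : IsLocalIsometry π) {x : M₀} {y z : M₁}
    (hz : z ∈ dirichletDomain π x y) {r : ℝ} (γ : Path (π z) x)
    (hγ : pathLength γ < ENNReal.ofReal r) : dist z y < r := by
  obtain ⟨w, hw, hzw⟩ := hcov.exists_mem_fiber_edist_le_pathLength hloc z γ
  exact (hz w hw).trans_lt (edist_lt_ofReal.mp (hzw.trans_lt hγ))

theorem dirichletDomain_inter_preimage_subset_ball_general
    {M₁ M₀ : Type*} [MetricSpace M₁] [MetricSpace M₀]
    (π : M₁ → M₀) (hcov : IsCoveringMap π) (hloc : IsLocalIsometry π)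
    (x : M₀) (y : M₁) (r : ℝ) :
    (∀ z : M₁, z ∈ dirichletDomain π x y →
      (∃ γ : Path (π z) x, pathLength γ < ENNReal.ofReal r) → dist z y < r) ∧
    (∀ K : Set M₀, (∀ p ∈ K, ∃ γ : Path p x, pathLength γ < ENNReal.ofReal r) →
      π ⁻¹' K ∩ dirichletDomain π x y ⊆ Metric.ball y r) := by
  refine ⟨fun z hz ⟨γ, hγ⟩ ↦ dist_lt_of_mem_dirichletDomain hcov hloc hz γ hγ, ?_⟩
  rintro K hK z ⟨hzK, hzD⟩
  obtain ⟨γ, hγ⟩ := hK (π z) hzK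
  exact dist_lt_of_mem_dirichletDomain hcov hloc hzD γ hγ

/-- **Lemma 2.2.** Let `π : M₁ → M₀` be a covering map between metric spaces which is a
local isometry, `x ∈ M₀` and `y ∈ π⁻¹(x)`. If `z` lies in the Dirichlet fundamental domain
`D_y` and `π(z)` can be joined to `x` by a path of length `< r`, then `dist z y < r`.
Consequently, if every point of `K ⊆ M₀` can be joined to `x` by a path of length `< r`,
then `π⁻¹(K) ∩ D_y ⊆ B(y, r)`. -/
theorem dirichletDomain_inter_preimage_subset_ball
    {M₁ M₀ : Type*} [MetricSpace M₁] [MetricSpace M₀]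
    (π : M₁ → M₀) (hcov : IsCoveringMap π) (hloc : IsLocalIsometry π)
    (x : M₀) (y : M₁) (hy : π y = x) (r : ℝ) :
    (∀ z : M₁, z ∈ dirichletDomain π x y →
      (∃ γ : Path (π z) x, pathLength γ < ENNReal.ofReal r) → dist z y < r) ∧
    (∀ K : Set M₀, (∀ p ∈ K, ∃ γ : Path p x, pathLength γ < ENNReal.ofReal r) →
      π ⁻¹' K ∩ dirichletDomain π x y ⊆ Metric.ball y r) :=
  dirichletDomain_inter_preimage_subset_ball_general π hcov hloc x y r
end
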